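/- Let $T$ be a piecewise affine transitive Markov map of $[0,1]$ with atoms $I_1,\dots,I_N$ and transition matrix $M$ (with $M_{ij}=1$ iff $T(I_i)\supseteq I_j$), and let $0<\gamma<1$ with $\gamma\,\rho(M)>1$ where $\rho(M)$ is the spectral radius. If the total variation of $\phi_\gamma=\sum_{k=0}^\infty \gamma^k T^{k+1}$ on $[0,1]$ is finite, then $\phi_\gamma$ is affine on each atom $I_i$. -/

import Mathlib

open Set ENNReal NNReal

attribute [local instance] Matrix.linftyOpNormedRing Matrix.linftyOpNormedAlgebra

noncomputable def phi (γ : ℝ) (T : ℝ → ℝ) (x : ℝ) : ℝ := ∑' k : ℕ, γ ^ k * T^[k + 1] x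

noncomputable def RV (f : ℝ → ℝ) (s : Set ℝ) : ℝ≥0∞ :=
  ⨅ a : ℝ, eVariationOn (fun x => f x - a * x) s

lemma evar_add_const (f : ℝ → ℝ) (c : ℝ) (s : Set ℝ) :
    eVariationOn (fun x => f x + c) s = eVariationOn f s := by
  simp only [eVariationOn, edist_add_right]

lemma evar_const_mul (c : ℝ) (f : ℝ → ℝ) (s : Set ℝ) :
    eVariationOn (fun x => c * f x) s = (‖c‖₊ : ℝ≥0∞) * eVariationOn f s := by
  simp only [eVariationOn]
  rw [ENNReal.mul_iSup]
  congr 1; funext p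
  rw [Finset.mul_sum]
  refine Finset.sum_congr rfl fun i _ => ?_
  simp only [edist_eq_enorm_sub, ← mul_sub, enorm_mul]; rfl

lemma rv_eqOn {f g : ℝ → ℝ} {s : Set ℝ} (h : EqOn f g s) : RV f s = RV g s := by
  unfold RV
  refine iInf_congr fun a => eVariationOn.eq_of_eqOn fun x hx => by simp [h hx]

lemma rv_add_affine (g : ℝ → ℝ) (a b : ℝ) (s : Set ℝ) :
    RV (fun x => (a * x + b) + g x) s = RV g s := by
  unfold RV
  apply le_antisymm
  · refine le_iInf fun c => iInf_le_of_le (c + a) (le_of_eq ?_)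
    rw [show (fun x => (a * x + b) + g x - (c + a) * x) = fun x => (g x - c * x) + b by
      funext x; ring]
    exact evar_add_const _ b s
  · refine le_iInf fun c => iInf_le_of_le (c - a) (le_of_eq ?_)
    rw [show (fun x => g x - (c - a) * x) = fun x => ((a * x + b) + g x - c * x) + (-b) by
      funext x; ring]
    exact evar_add_const _ (-b) s

lemma rv_const_mul_ge (c : ℝ) (hc : 0 < c) (g : ℝ → ℝ) (s : Set ℝ) :
    ENNReal.ofReal c * RV g s ≤ RV (fun x => c * g x) s := by
  refine le_iInf fun d => ?_
  have e1 : (fun x => c * g x - d * x) = fun x => c * (g x - (d / c) * x) := by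
    funext x; field_simp
  rw [e1, evar_const_mul]
  have : (‖c‖₊ : ℝ≥0∞) = ENNReal.ofReal c := by
    rw [← Real.enorm_eq_ofReal hc.le]; rfl
  rw [this]
  exact mul_le_mul_right (iInf_le _ (d / c)) _

lemma rv_comp_affine_ge (f T : ℝ → ℝ) {s : Set ℝ} {a b : ℝ} (ha : a ≠ 0)
    (hT : ∀ x ∈ s, T x = a * x + b) :
    RV f (T '' s) ≤ RV (fun x => f (T x)) s := by
  refine le_iInf fun c => ?_
  set g : ℝ → ℝ := fun y => f y - (c / a) * y with hg
  have e1 : eVariationOn (fun x => f (T x) - c * x) s = eVariationOn (g ∘ T) s := by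
    have heq : EqOn (fun x => f (T x) - c * x) (fun x => (g ∘ T) x + c * b / a) s := by
      intro x hx
      simp only [hg, Function.comp_apply]
      rw [hT x hx]
      field_simp
      ring
    rw [eVariationOn.eq_of_eqOn heq, evar_add_const]
  have e2 : eVariationOn (g ∘ T) s = eVariationOn g (T '' s) := by
    rcases lt_or_gt_of_ne ha with hneg | hpos
    · refine eVariationOn.comp_eq_of_antitoneOn g T fun x hx y hy hxy => ?_
      rw [hT x hx, hT y hy]
      nlinarith
    · refine eVariationOn.comp_eq_of_monotoneOn g T fun x hx y hy hxy => ?_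
      rw [hT x hx, hT y hy]
      nlinarith
  rw [e1, e2]
  exact iInf_le _ (c / a)

lemma phi_eq {γ : ℝ} {T : ℝ → ℝ} (hγ0 : 0 < γ) (hγ1 : γ < 1)
    (hT : MapsTo T (Icc 0 1) (Icc 0 1)) {x : ℝ} (hx : x ∈ Icc (0:ℝ) 1) :
    phi γ T x = T x + γ * phi γ T (T x) := by
  have hsum : ∀ y ∈ Icc (0:ℝ) 1, Summable (fun k : ℕ => γ ^ k * T^[k + 1] y) := by
    intro y hy
    apply Summable.of_norm
    refine Summable.of_nonneg_of_le (fun k => norm_nonneg _) (fun k => ?_)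
      (summable_geometric_of_lt_one hγ0.le hγ1)
    have hk : T^[k + 1] y ∈ Icc (0:ℝ) 1 := hT.iterate (k + 1) hy
    have h1 : |T^[k + 1] y| ≤ 1 := by rw [abs_le]; exact ⟨by linarith [hk.1], hk.2⟩
    rw [norm_mul, Real.norm_eq_abs, Real.norm_eq_abs, abs_of_nonneg (pow_nonneg hγ0.le k)]
    nlinarith [pow_nonneg hγ0.le k, abs_nonneg (T^[k+1] y)]
  unfold phi
  rw [Summable.tsum_eq_zero_add (hsum x hx)]
  have e0 : γ ^ 0 * T^[0 + 1] x = T x := by simp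
  have e1 : (fun k : ℕ => γ ^ (k + 1) * T^[k + 1 + 1] x)
      = fun k : ℕ => γ * (γ ^ k * T^[k + 1] (T x)) := by
    funext k
    rw [Function.iterate_succ_apply T (k + 1) x, pow_succ']
    ring
  rw [e0, e1]
  congr 1
  exact tsum_mul_left

lemma evar_sum_le (f : ℝ → ℝ) {N : ℕ} (p : Fin (N+1) → ℝ) (hp : Monotone p)
    (S : Finset (Fin N)) :
    ∑ j ∈ S, eVariationOn f (Ico (p j.castSucc) (p j.succ)) ≤
      eVariationOn f (⋃ j ∈ S, Ico (p j.castSucc) (p j.succ)) := by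
  induction S using Finset.induction_on_max with
  | empty => simp
  | insert a s ha ih =>
      have hans : a ∉ s := fun h => lt_irrefl a (ha a h)
      rw [Finset.sum_insert hans, Finset.set_biUnion_insert, Set.union_comm, add_comm]
      refine le_trans (add_le_add ih le_rfl) (eVariationOn.add_le_union f ?_)
      rintro x hx y hy
      simp only [Set.mem_iUnion, exists_prop] at hx
      obtain ⟨j, hjs, hx⟩ := hx
      have hj : (j.succ : Fin (N+1)) ≤ a.castSucc := by
        have := ha j hjs
        simp only [Fin.le_def, Fin.coe_castSucc, Fin.val_succ]
        omega
      exact le_trans (le_of_lt hx.2) (le_trans (hp hj) hy.1)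

lemma pair_est {f : ℝ → ℝ} {s : Set ℝ} {c ε : ℝ} (hε : 0 < ε)
    (h : eVariationOn (fun x => f x - c * x) s < ENNReal.ofReal ε)
    {y z : ℝ} (hy : y ∈ s) (hz : z ∈ s) :
    |f z - f y - c * (z - y)| ≤ ε := by
  have h2 := (eVariationOn.edist_le (fun x => f x - c * x) hz hy).trans_lt h
  rw [edist_dist, ENNReal.ofReal_lt_ofReal_iff hε] at h2
  rw [Real.dist_eq] at h2
  have : f z - c * z - (f y - c * y) = f z - f y - c * (z - y) := by ring
  rw [this] at h2
  exact h2.le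

lemma affine_of_rv_zero {f : ℝ → ℝ} {l r : ℝ} (hlr : l < r)
    (h : RV f (Ico l r) = 0) :
    ∃ a b : ℝ, ∀ x ∈ Ico l r, f x = a * x + b := by
  set x0 : ℝ := l with hx0
  set x1 : ℝ := (l + r) / 2 with hx1
  have hx0m : x0 ∈ Ico l r := ⟨le_refl l, hlr⟩
  have hx1m : x1 ∈ Ico l r := ⟨by simp [hx1]; linarith, by simp [hx1]; linarith⟩
  have hd : (0:ℝ) < x1 - x0 := by simp [hx0, hx1]; linarith
  set A : ℝ := (f x1 - f x0) / (x1 - x0) with hA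
  have key : ∀ y ∈ Ico l r, ∀ z ∈ Ico l r, f z - f y = A * (z - y) := by
    intro y hy z hz
    set u : ℝ := f z - f y - A * (z - y) with hu
    set K : ℝ := 1 + (r - l) / (x1 - x0) with hK
    have hK0 : 0 < K := by
      have : 0 < (r - l) / (x1 - x0) := div_pos (by linarith) hd
      rw [hK]; linarith
    have hbound : ∀ ε : ℝ, 0 < ε → |u| ≤ ε * K := by
      intro ε hε
      have h0 : RV f (Ico l r) < ENNReal.ofReal ε := by
        rw [h]; exact ENNReal.ofReal_pos.2 hε
      rw [RV, iInf_lt_iff] at h0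
      obtain ⟨c, hc⟩ := h0
      have p1 := pair_est hε hc hy hz
      have p2 := pair_est hε hc hx0m hx1m
      have hAc : |A - c| * (x1 - x0) ≤ ε := by
        have : (A - c) * (x1 - x0) = f x1 - f x0 - c * (x1 - x0) := by
          rw [hA]; field_simp
        calc |A - c| * (x1 - x0) = |(A - c) * (x1 - x0)| := by
              rw [abs_mul, abs_of_pos hd]
          _ = |f x1 - f x0 - c * (x1 - x0)| := by rw [this]
          _ ≤ ε := p2
      have hAc' : |A - c| ≤ ε / (x1 - x0) := by
        rw [le_div_iff₀ hd]; exact hAc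
      have hzy : |z - y| ≤ r - l := by
        rw [abs_le]; constructor <;> [linarith [hy.2, hz.1]; linarith [hz.2, hy.1]]
      calc |u| = |(f z - f y - c * (z - y)) + (c - A) * (z - y)| := by
            rw [hu]; ring_nf
        _ ≤ |f z - f y - c * (z - y)| + |c - A| * |z - y| := by
            refine (abs_add_le _ _).trans ?_; rw [abs_mul]
        _ ≤ ε + (ε / (x1 - x0)) * (r - l) := by
            refine add_le_add p1 ?_
            rw [abs_sub_comm]
            exact mul_le_mul hAc' hzy (abs_nonneg _) (by positivity)
        _ = ε * K := by rw [hK]; field_simp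
    have : |u| ≤ 0 := by
      by_contra hcon
      push_neg at hcon
      have hKne : K ≠ 0 := ne_of_gt hK0
      have hb := hbound (|u| / (2 * K)) (by positivity)
      have h2 : |u| / (2 * K) * K = |u| / 2 := by field_simp
      rw [h2] at hb
      linarith
    have hu0 : u = 0 := abs_nonpos_iff.mp this
    rw [hu] at hu0
    linarith
  refine ⟨A, f x0 - A * x0, fun x hx => ?_⟩
  have h := key x0 hx0m x hx
  linear_combination h

lemma pow_bound {N : ℕ} (hN : Nonempty (Fin N)) (M : Matrix (Fin N) (Fin N) ℝ)
    (γ r : ℝ) (hγ : 0 < γ) (hr : 0 ≤ r)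
    (h : ENNReal.ofReal r ≤ ENNReal.ofReal γ * spectralRadius ℝ M) (n : ℕ) :
    ∃ i, r ^ (n + 1) ≤ γ ^ (n + 1) * ∑ j, ‖(M ^ (n + 1)) i j‖ := by
  haveI := hN
  have g := spectrum.spectralRadius_le_pow_nnnorm_pow_one_div ℝ M n
  rw [nnnorm_one, ENNReal.coe_one, ENNReal.one_rpow, mul_one] at g
  have hpow : spectralRadius ℝ M ^ (n + 1) ≤ ((‖M ^ (n + 1)‖₊ : ℝ≥0) : ℝ≥0∞) := by
    calc spectralRadius ℝ M ^ (n + 1)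
        ≤ ((((‖M ^ (n + 1)‖₊ : ℝ≥0) : ℝ≥0∞)) ^ ((1 : ℝ) / (n + 1))) ^ (n + 1) :=
          pow_le_pow_left₀ zero_le g (n + 1)
      _ = ((‖M ^ (n + 1)‖₊ : ℝ≥0) : ℝ≥0∞) := by
          rw [← ENNReal.rpow_natCast (_ ^ ((1:ℝ)/(n+1))) (n+1), ← ENNReal.rpow_mul]
          have hone : (1 / ((n:ℝ) + 1)) * ((n + 1 : ℕ) : ℝ) = 1 := by
            push_cast; field_simp
          rw [hone, ENNReal.rpow_one]
  have h2 : ENNReal.ofReal r ^ (n + 1) ≤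
      ENNReal.ofReal γ ^ (n + 1) * ((‖M ^ (n + 1)‖₊ : ℝ≥0) : ℝ≥0∞) := by
    calc ENNReal.ofReal r ^ (n + 1)
        ≤ (ENNReal.ofReal γ * spectralRadius ℝ M) ^ (n + 1) := pow_le_pow_left₀ zero_le h (n + 1)
      _ = ENNReal.ofReal γ ^ (n + 1) * spectralRadius ℝ M ^ (n + 1) := mul_pow _ _ _
      _ ≤ _ := mul_le_mul_right hpow _
  have h3 : r ^ (n + 1) ≤ γ ^ (n + 1) * ‖M ^ (n + 1)‖ := by
    have hfin : ENNReal.ofReal γ ^ (n + 1) * ((‖M ^ (n + 1)‖₊ : ℝ≥0) : ℝ≥0∞) ≠ ⊤ :=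
      ENNReal.mul_ne_top (by simp [ENNReal.pow_ne_top, ENNReal.ofReal_ne_top])
        ENNReal.coe_ne_top
    have := ENNReal.toReal_mono hfin h2
    rw [ENNReal.toReal_mul, ENNReal.toReal_pow, ENNReal.toReal_pow,
      ENNReal.toReal_ofReal hr, ENNReal.toReal_ofReal hγ.le, ENNReal.coe_toReal,
      coe_nnnorm] at this
    exact this
  obtain ⟨i, _, hi⟩ := Finset.exists_mem_eq_sup Finset.univ Finset.univ_nonempty
    (fun i : Fin N => ∑ j, ‖(M ^ (n + 1)) i j‖₊)
  refine ⟨i, h3.trans (le_of_eq ?_)⟩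
  congr 1
  rw [Matrix.linfty_opNorm_def, hi]
  push_cast
  rfl

lemma rv_le_pert (f : ℝ → ℝ) (s : Set ℝ) (a : ℝ) :
    RV f s ≤ eVariationOn (fun x => f x - a * x) s := iInf_le _ a

theorem affine_on_atoms_of_finite_variation (N : ℕ) (T : ℝ → ℝ)
    (p : Fin (N + 1) → ℝ) (M : Matrix (Fin N) (Fin N) ℝ) (γ : ℝ)
    (hγ0 : 0 < γ) (hγ1 : γ < 1)
    (hp : StrictMono p) (hp0 : p 0 = 0) (hpN : p (Fin.last N) = 1)
    (hT : MapsTo T (Icc 0 1) (Icc 0 1))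
    (haff : ∀ i : Fin N, ∃ a b : ℝ,
      ∀ x ∈ Ico (p i.castSucc) (p i.succ), T x = a * x + b)
    (hMval : ∀ i j, M i j = 0 ∨ M i j = 1)
    (hMarkov : ∀ i j : Fin N, M i j = 1 ↔
      Ico (p j.castSucc) (p j.succ) ⊆ T '' Ico (p i.castSucc) (p i.succ))
    (hMarkovUnion : ∀ i : Fin N, ∃ S : Finset (Fin N),
      T '' Ico (p i.castSucc) (p i.succ) = ⋃ j ∈ S, Ico (p j.castSucc) (p j.succ))
    (hirr : ∀ i j, ∃ n : ℕ, 1 ≤ n ∧ 0 < (M ^ n) i j)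
    (hρ : 1 < ENNReal.ofReal γ * spectralRadius ℝ M)
    (hfin : eVariationOn (phi γ T) (Icc 0 1) ≠ ⊤) :
    ∀ i : Fin N, ∃ a b : ℝ,
      ∀ x ∈ Ico (p i.castSucc) (p i.succ), phi γ T x = a * x + b := by
  have hpm : Monotone p := hp.monotone
  have hsub : ∀ i : Fin N, Ico (p i.castSucc) (p i.succ) ⊆ Icc (0:ℝ) 1 := by
    intro i x hx
    constructor
    · calc (0:ℝ) = p 0 := hp0.symm
        _ ≤ p i.castSucc := hpm (Fin.zero_le _)
        _ ≤ x := hx.1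
    · calc x ≤ p i.succ := hx.2.le
        _ ≤ p (Fin.last N) := hpm (Fin.le_last _)
        _ = 1 := hpN
  have hlt : ∀ i : Fin N, p i.castSucc < p i.succ := fun i => hp (Fin.castSucc_lt_succ (i := i))
  set v : Fin N → ℝ≥0∞ := fun i => RV (phi γ T) (Ico (p i.castSucc) (p i.succ)) with hv
  have hvfin : ∀ i, v i ≠ ⊤ := by
    intro i
    refine ne_top_of_le_ne_top hfin ?_
    refine le_trans (rv_le_pert _ _ 0) ?_
    have : (fun x => phi γ T x - 0 * x) = phi γ T := by funext x; ring
    rw [this]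
    exact eVariationOn.mono _ (hsub i)
  -- nonzero entries of M and disjointness of atoms
  have hM0 : ∀ i j, 0 ≤ M i j := by
    intro i j; rcases hMval i j with h | h <;> rw [h] <;> norm_num
  have hdisj : ∀ j k : Fin N, ∀ x : ℝ, x ∈ Ico (p j.castSucc) (p j.succ) →
      x ∈ Ico (p k.castSucc) (p k.succ) → j = k := by
    intro j k x hj hk
    by_contra hne
    rcases lt_or_gt_of_ne hne with h | h
    · have hle : (j.succ : Fin (N+1)) ≤ k.castSucc := by
        simp only [Fin.le_def, Fin.val_succ, Fin.coe_castSucc]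
        exact Fin.lt_def.1 h
      linarith [hj.2, hk.1, hpm hle]
    · have hle : (k.succ : Fin (N+1)) ≤ j.castSucc := by
        simp only [Fin.le_def, Fin.val_succ, Fin.coe_castSucc]
        exact Fin.lt_def.1 h
      linarith [hk.2, hj.1, hpm hle]
  -- slope is nonzero on each atom
  have hslope : ∀ i : Fin N, ∃ a b : ℝ, a ≠ 0 ∧
      ∀ x ∈ Ico (p i.castSucc) (p i.succ), T x = a * x + b := by
    intro i
    obtain ⟨a, b, hab⟩ := haff i
    refine ⟨a, b, ?_, hab⟩
    rintro rfl
    obtain ⟨n, hn1, hn⟩ := hirr i i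
    obtain ⟨m, rfl⟩ : ∃ m, n = m + 1 := ⟨n - 1, by omega⟩
    rw [pow_succ', Matrix.mul_apply] at hn
    obtain ⟨j, hj⟩ : ∃ j, M i j ≠ 0 := by
      by_contra hcon
      push_neg at hcon
      simp [hcon] at hn
    have hMij : M i j = 1 := (hMval i j).resolve_left hj
    have hsubj := (hMarkov i j).1 hMij
    have h1 : p j.castSucc ∈ T '' Ico (p i.castSucc) (p i.succ) :=
      hsubj ⟨le_refl _, hlt j⟩
    have h2 : (p j.castSucc + p j.succ) / 2 ∈ T '' Ico (p i.castSucc) (p i.succ) :=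
      hsubj ⟨by linarith [hlt j], by linarith [hlt j]⟩
    obtain ⟨x1, hx1, he1⟩ := h1
    obtain ⟨x2, hx2, he2⟩ := h2
    rw [hab x1 hx1] at he1
    rw [hab x2 hx2] at he2
    have := hlt j
    linarith [he1, he2]
  -- key inequality
  have hkey : ∀ i : Fin N, γ * ∑ j, M i j * (v j).toReal ≤ (v i).toReal := by
    intro i
    obtain ⟨a, b, ha0, hab⟩ := hslope i
    obtain ⟨S, hS⟩ := hMarkovUnion i
    have e1 : v i = RV (fun x => γ * phi γ T (T x)) (Ico (p i.castSucc) (p i.succ)) := by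
      have heq : EqOn (phi γ T)
          (fun x => (a * x + b) + γ * phi γ T (T x)) (Ico (p i.castSucc) (p i.succ)) := by
        intro x hx
        show phi γ T x = a * x + b + γ * phi γ T (T x)
        rw [phi_eq hγ0 hγ1 hT (hsub i hx), hab x hx]
      calc v i = RV (fun x => (a * x + b) + γ * phi γ T (T x))
            (Ico (p i.castSucc) (p i.succ)) := rv_eqOn heq
        _ = _ := rv_add_affine _ a b _
    have e2 : ENNReal.ofReal γ *
        RV (phi γ T) (T '' Ico (p i.castSucc) (p i.succ)) ≤ v i := by
      rw [e1]
      refine le_trans (mul_le_mul_right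
        (rv_comp_affine_ge (phi γ T) T ha0 hab) _) ?_
      exact rv_const_mul_ge γ hγ0 _ _
    have e3 : ∑ j ∈ S, v j ≤ RV (phi γ T) (T '' Ico (p i.castSucc) (p i.succ)) := by
      rw [hS]
      refine le_iInf fun c => ?_
      refine le_trans ?_ (evar_sum_le _ p hpm S)
      exact Finset.sum_le_sum fun j _ => rv_le_pert _ _ c
    have e4 : ENNReal.ofReal γ * ∑ j ∈ S, v j ≤ v i :=
      le_trans (mul_le_mul_right e3 _) e2
    have hSfin : (∑ j ∈ S, v j) ≠ ⊤ := by
      refine ENNReal.sum_ne_top.2 fun j _ => hvfin j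
    have e5 := ENNReal.toReal_mono (hvfin i) e4
    rw [ENNReal.toReal_mul, ENNReal.toReal_ofReal hγ0.le, ENNReal.toReal_sum
      (fun j _ => hvfin j)] at e5
    have hS1 : ∀ j ∈ S, M i j = 1 := by
      intro j hj
      refine (hMarkov i j).2 ?_
      rw [hS]
      exact fun x hx => Set.mem_biUnion hj hx
    have hS0 : ∀ j, j ∉ S → M i j = 0 := by
      intro j hj
      rcases hMval i j with h | h
      · exact h
      exfalso
      have hsubj := (hMarkov i j).1 h
      rw [hS] at hsubj
      have hx := hsubj ⟨le_refl _, hlt j⟩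
      simp only [Set.mem_iUnion, exists_prop] at hx
      obtain ⟨k, hkS, hk⟩ := hx
      exact hj ((hdisj j k _ ⟨le_refl _, hlt j⟩ hk) ▸ hkS)
    calc γ * ∑ j, M i j * (v j).toReal = γ * ∑ j ∈ S, (v j).toReal := by
          congr 1
          rw [← Finset.sum_subset (Finset.subset_univ S)
            (fun j _ hj => by rw [hS0 j hj, zero_mul])]
          exact Finset.sum_congr rfl fun j hj => by rw [hS1 j hj, one_mul]
      _ ≤ (v i).toReal := e5
  -- nonnegativity of powers
  have hMn : ∀ n : ℕ, ∀ i j, 0 ≤ (M ^ n) i j := by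
    intro n
    induction n with
    | zero =>
        intro i j
        rw [pow_zero, Matrix.one_apply]
        split <;> norm_num
    | succ n ih =>
        intro i j
        rw [pow_succ, Matrix.mul_apply]
        exact Finset.sum_nonneg fun k _ => mul_nonneg (ih i k) (hM0 k j)
  have hw0 : ∀ j, 0 ≤ (v j).toReal := fun j => ENNReal.toReal_nonneg
  -- iterated inequality
  have hiter : ∀ n : ℕ, ∀ i, γ ^ n * ∑ j, (M ^ n) i j * (v j).toReal ≤ (v i).toReal := by
    intro n
    induction n with
    | zero =>
        intro i
        simp [Matrix.one_apply]
    | succ n ih =>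
        intro i
        have expand : ∑ j, (M ^ (n+1)) i j * (v j).toReal
            = ∑ k, M i k * ∑ j, (M ^ n) k j * (v j).toReal := by
          rw [pow_succ']
          simp only [Matrix.mul_apply, Finset.sum_mul, Finset.mul_sum]
          rw [Finset.sum_comm]
          exact Finset.sum_congr rfl fun k _ => Finset.sum_congr rfl fun j _ =>
            mul_assoc _ _ _
        have rearr : γ ^ (n+1) * ∑ k, M i k * ∑ j, (M ^ n) k j * (v j).toReal
            = γ * ∑ k, M i k * (γ ^ n * ∑ j, (M ^ n) k j * (v j).toReal) := by
          rw [Finset.mul_sum, Finset.mul_sum]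
          refine Finset.sum_congr rfl fun k _ => ?_
          simp only [Finset.mul_sum]
          refine Finset.sum_congr rfl fun j _ => ?_
          ring
        rw [expand, rearr]
        refine le_trans ?_ (hkey i)
        refine mul_le_mul_of_nonneg_left (Finset.sum_le_sum fun k _ => ?_) hγ0.le
        exact mul_le_mul_of_nonneg_left (ih k) (hM0 i k)
  -- conclude
  intro i0
  refine affine_of_rv_zero (hlt i0) ?_
  by_contra hvi
  have hwpos : 0 < (v i0).toReal := ENNReal.toReal_pos hvi (hvfin i0)
  haveI : Nonempty (Fin N) := ⟨i0⟩
  have hpos : ∀ i, 0 < (v i).toReal := by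
    intro i
    obtain ⟨n, hn1, hn⟩ := hirr i i0
    have hge := hiter n i
    have hsingle : γ ^ n * ((M ^ n) i i0 * (v i0).toReal)
        ≤ γ ^ n * ∑ j, (M ^ n) i j * (v j).toReal := by
      refine mul_le_mul_of_nonneg_left ?_ (pow_nonneg hγ0.le n)
      exact Finset.single_le_sum (fun j _ => mul_nonneg (hMn n i j) (hw0 j))
        (Finset.mem_univ i0)
    have h1 : 0 < γ ^ n * ((M ^ n) i i0 * (v i0).toReal) :=
      mul_pos (pow_pos hγ0 n) (mul_pos hn hwpos)
    linarith [hsingle.trans hge]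
  obtain ⟨imin, -, hmin⟩ := Finset.exists_min_image Finset.univ
    (fun i => (v i).toReal) Finset.univ_nonempty
  obtain ⟨imax, -, hmax⟩ := Finset.exists_max_image Finset.univ
    (fun i => (v i).toReal) Finset.univ_nonempty
  set c : ℝ := (v imin).toReal with hc
  set C : ℝ := (v imax).toReal with hC
  have hcpos : 0 < c := hpos imin
  obtain ⟨r, hr0, hr1, hr2⟩ := ENNReal.lt_iff_exists_real_btwn.1 hρ
  have hr1' : 1 < r := ENNReal.one_lt_ofReal.1 hr1
  obtain ⟨m, hm⟩ := pow_unbounded_of_one_lt (C / c) hr1'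
  obtain ⟨i, hi⟩ := pow_bound ⟨i0⟩ M γ r hγ0 hr0 hr2.le m
  have hnorm : ∑ j, ‖(M ^ (m + 1)) i j‖ = ∑ j, (M ^ (m + 1)) i j :=
    Finset.sum_congr rfl fun j _ => Real.norm_of_nonneg (hMn (m+1) i j)
  rw [hnorm] at hi
  have hchain : r ^ (m+1) * c ≤ (v i).toReal := by
    calc r ^ (m+1) * c ≤ (γ ^ (m+1) * ∑ j, (M ^ (m+1)) i j) * c :=
          mul_le_mul_of_nonneg_right hi hcpos.le
      _ = γ ^ (m+1) * ∑ j, (M ^ (m+1)) i j * c := by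
          rw [mul_assoc, Finset.sum_mul]
      _ ≤ γ ^ (m+1) * ∑ j, (M ^ (m+1)) i j * (v j).toReal := by
          refine mul_le_mul_of_nonneg_left (Finset.sum_le_sum fun j _ =>
            mul_le_mul_of_nonneg_left (hmin j (Finset.mem_univ j)) (hMn _ i j))
            (pow_nonneg hγ0.le _)
      _ ≤ (v i).toReal := hiter (m+1) i
  have hCm : C < r ^ m * c := by
    rw [div_lt_iff₀ hcpos] at hm
    linarith
  have hmono : r ^ m * c ≤ r ^ (m+1) * c := by
    have h1 : r ^ m ≤ r ^ (m+1) := pow_le_pow_right₀ hr1'.le (Nat.le_succ m)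
    nlinarith
  have := hmax i (Finset.mem_univ i)
  linarith
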